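/- Let G be a graph admitting a tree-cut decomposition (T, {X_t}) with thickness at most α and crossing number at most k, and let S ⊆ V(G) with |S| ≥ α+1 and |δ_G(S, V(G)∖S)| ≤ 2α²+4k. With γ_S(v) = |δ_G({v}, V(G)∖S)| for v ∈ S, the induced graph G[S] admits a tree-cut decomposition (T', {X'_t}) where T' is a star with center t_c and at least one leaf, |X'_{t_c}| ≤ α, cross(t_c) ≤ k, every leaf bag X'_q satisfies γ_S(X'_q) ≤ α²+2k and |δ_{G[S]}(X'_q, X'_{t_c})| ≤ α²+k, and no leaf bag equals all of S. -/

import Mathlib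

open SimpleGraph

universe u

/-- A tree-cut decomposition of a graph `G`: a finite tree `T` together with
pairwise disjoint (possibly empty) bags covering the vertex set of `G`. -/
structure TreeCutDecomp {V : Type u} (G : SimpleGraph V) where
  β : Type
  fintypeβ : Fintype β
  T : SimpleGraph β
  isTree : T.IsTree
  bag : β → Set V
  disj : Pairwise fun s t => Disjoint (bag s) (bag t)
  covers : ∀ v : V, ∃ t, v ∈ bag t

namespace TreeCutDecomp

variable {V : Type u} {G : SimpleGraph V}

/-- The edge `e` of `G` crosses the bag at node `t`: its endpoints lie in bag-unions of
two distinct components of `T - t`. -/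
def Crosses (D : TreeCutDecomp G) (t : D.β) (e : Sym2 V) : Prop :=
  e ∈ G.edgeSet ∧ ∃ (u v : V) (s₁ s₂ : D.β) (h₁ : s₁ ≠ t) (h₂ : s₂ ≠ t),
    e = s(u, v) ∧ u ∈ D.bag s₁ ∧ v ∈ D.bag s₂ ∧
    ¬ (D.T.induce {x | x ≠ t}).Reachable ⟨s₁, h₁⟩ ⟨s₂, h₂⟩

/-- The number of edges crossing the bag at node `t`. -/
noncomputable def crossNum (D : TreeCutDecomp G) (t : D.β) : ℕ :=
  {e : Sym2 V | D.Crosses t e}.ncard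

/-- The crossing number of the decomposition is at most `k`. -/
def CrossLE (D : TreeCutDecomp G) (k : ℕ) : Prop := ∀ t, D.crossNum t ≤ k

/-- The thickness (maximum bag size) of the decomposition is at most `a`. -/
def ThickLE (D : TreeCutDecomp G) (a : ℕ) : Prop := ∀ t, (D.bag t).ncard ≤ a

end TreeCutDecomp

/-- The `α`-edge-crossing width: minimum crossing number over tree-cut decompositions
of thickness at most `α`. -/
noncomputable def ecrwA {V : Type u} (G : SimpleGraph V) (a : ℕ) : ℕ :=
  sInf {k | ∃ D : TreeCutDecomp G, D.ThickLE a ∧ D.CrossLE k}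

/-- The edge-crossing width: minimum over tree-cut decompositions of the maximum of the
thickness and the crossing number. -/
noncomputable def ecrw {V : Type u} (G : SimpleGraph V) : ℕ :=
  sInf {k | ∃ D : TreeCutDecomp G, D.ThickLE k ∧ D.CrossLE k}

/-- The set of edges of `G'` with one endpoint in `A` and one in `B`. -/
def edgesBetween {W : Type*} (G' : SimpleGraph W) (A B : Set W) : Set (Sym2 W) :=
  {e | e ∈ G'.edgeSet ∧ ∃ u ∈ A, ∃ w ∈ B, e = s(u, w)}

/-!
Choose a weighted centroid `t` of the tree, for weights that count `γ_S` first and the vertices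
of `S` second: every branch of `T` at `t` then carries at most half of
`γ_S(S) ≤ |δ_G(S, V(G) ∖ S)|` and misses a vertex of `S`, and some branch is nonempty because
`|X_t| ≤ α < |S|`. Contracting each branch to a leaf of a star centred at `X_t` gives the
decomposition. An edge from a leaf `c` to the centre either joins `X_t` to the bag of the
neighbour `r` of `t` in `c` (at most `α²` edges) or crosses `r` (at most `k` edges), because in
a tree `r` separates the rest of `c` from `t`.
-/

namespace SimpleGraph

variable {β : Type*} {T : SimpleGraph β}

theorem IsAcyclic.length_eq_dist (hT : T.IsAcyclic) {u v : β} {p : T.Walk u v}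
    (hp : p.IsPath) : p.length = T.dist u v := by
  obtain ⟨q, hq, hqd⟩ := p.reachable.exists_path_of_dist
  rw [← hqd, Subtype.mk.inj ((hT.subsingleton_path u v).elim ⟨p, hp⟩ ⟨q, hq⟩)]

open Classical in
noncomputable def branchOf (T : SimpleGraph β) (t b : β) :
    Option (T.induce {x | x ≠ t}).ConnectedComponent :=
  if h : b = t then none else some ((T.induce {x | x ≠ t}).connectedComponentMk ⟨b, h⟩)

@[simp]
theorem branchOf_self (t : β) : T.branchOf t t = none :=
  dif_pos rfl

@[simp]
theorem branchOf_eq_none_iff {t b : β} : T.branchOf t b = none ↔ b = t := by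
  unfold branchOf; split_ifs <;> simp_all

theorem branchOf_of_ne {t b : β} (h : b ≠ t) :
    T.branchOf t b = some ((T.induce {x | x ≠ t}).connectedComponentMk ⟨b, h⟩) :=
  dif_neg h

theorem branchOf_eq_of_reachable {t a b : β} {ha : a ≠ t} {hb : b ≠ t}
    (h : (T.induce {x | x ≠ t}).Reachable ⟨a, ha⟩ ⟨b, hb⟩) : T.branchOf t a = T.branchOf t b := by
  rw [branchOf_of_ne ha, branchOf_of_ne hb, ConnectedComponent.sound h]

theorem reachable_of_branchOf_eq {t a b : β} (ha : a ≠ t) (hb : b ≠ t)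
    (h : T.branchOf t a = T.branchOf t b) : (T.induce {x | x ≠ t}).Reachable ⟨a, ha⟩ ⟨b, hb⟩ := by
  rw [branchOf_of_ne ha, branchOf_of_ne hb, Option.some_inj] at h
  exact ConnectedComponent.exact h

theorem Connected.exists_adj_branchOf_eq (hT : T.Connected) {t : β}
    (c : (T.induce {x | x ≠ t}).ConnectedComponent) :
    ∃ r, T.Adj r t ∧ T.branchOf t r = some c := by
  classical
  obtain ⟨⟨b, hb⟩, rfl⟩ := c.exists_rep
  let q := (hT.preconnected t b).some.toPath
  obtain ⟨r, htr, p, hqp⟩ := Walk.exists_eq_cons_of_ne hb.symm q.1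
  have hp : t ∉ p.support := by
    have := q.2
    rw [hqp, Walk.cons_isPath_iff] at this
    exact this.2
  have hpt : ∀ x ∈ p.support, x ∈ {x | x ≠ t} := fun x hx hxt => hp (hxt ▸ hx)
  exact ⟨r, htr.symm, (branchOf_eq_of_reachable (p.induce _ hpt).reachable).trans
    (branchOf_of_ne hb)⟩

theorem IsAcyclic.dist_eq_dist_add_one_of_branchOf_eq (hT : T.IsAcyclic) {t r b : β}
    (hrt : T.Adj r t) (h : T.branchOf t b = T.branchOf t r) :
    T.dist b t = T.dist b r + 1 := by
  classical
  have hb : b ≠ t := by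
    rintro rfl
    rw [branchOf_self, eq_comm, branchOf_eq_none_iff] at h
    exact hrt.ne h
  obtain ⟨w⟩ := reachable_of_branchOf_eq hb hrt.ne h
  let p : T.Walk b r := (w.map (Embedding.induce {x | x ≠ t}).toHom).bypass
  have hp : p.IsPath := Walk.bypass_isPath _
  have ht : t ∉ p.support := fun hmem => by
    obtain ⟨x, -, hx⟩ :=
      List.mem_map.mp (Walk.support_map _ _ ▸ Walk.support_bypass_subset_support _ hmem)
    exact x.2 hx
  rw [← hT.length_eq_dist (hp.concat ht hrt), Walk.length_concat, hT.length_eq_dist hp]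

theorem IsAcyclic.branchOf_ne_of_branchOf_eq (hT : T.IsAcyclic) {t r b : β} (hrt : T.Adj r t)
    (h : T.branchOf t b = T.branchOf t r) : T.branchOf r b ≠ T.branchOf r t := fun h' => by
  have := hT.dist_eq_dist_add_one_of_branchOf_eq hrt h
  have := hT.dist_eq_dist_add_one_of_branchOf_eq hrt.symm h'
  omega

open Classical in
theorem IsTree.exists_centroid [Fintype β] (hT : T.IsTree) {ι : Type*} (s : Finset ι)
    (home : ι → β) (w : ι → ℕ) :
    ∃ t, ∀ c, 2 * ∑ i ∈ s with T.branchOf t (home i) = some c, w i ≤ ∑ i ∈ s, w i := by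
  classical
  have : Nonempty β := hT.connected.nonempty
  -- `t` minimises the total weighted distance to the points: moving to the neighbour `r` of `t`
  -- in `c` brings the points of `c` one step closer and the others at most one step farther.
  obtain ⟨t, -, ht⟩ := Finset.exists_min_image Finset.univ
    (fun x => ∑ i ∈ s, w i * T.dist (home i) x) Finset.univ_nonempty
  refine ⟨t, fun c => ?_⟩
  obtain ⟨r, hrt, hr⟩ := hT.connected.exists_adj_branchOf_eq c
  have hmin : ∑ i ∈ s, w i * T.dist (home i) t ≤ ∑ i ∈ s, w i * T.dist (home i) r :=
    ht r (Finset.mem_univ r)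
  set F := {i ∈ s | T.branchOf t (home i) = some c}
  have hFs : F ⊆ s := Finset.filter_subset _ s
  have hin : ∑ i ∈ F, w i * T.dist (home i) r + ∑ i ∈ F, w i
      = ∑ i ∈ F, w i * T.dist (home i) t := by
    rw [← Finset.sum_add_distrib]
    refine Finset.sum_congr rfl fun i hi => ?_
    rw [hT.isAcyclic.dist_eq_dist_add_one_of_branchOf_eq hrt
      ((Finset.mem_filter.mp hi).2.trans hr.symm)]
    ring
  have hout : ∑ i ∈ s \ F, w i * T.dist (home i) r
      ≤ ∑ i ∈ s \ F, w i * T.dist (home i) t + ∑ i ∈ s \ F, w i := by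
    rw [← Finset.sum_add_distrib]
    refine Finset.sum_le_sum fun i _ => ?_
    have : T.dist (home i) r ≤ T.dist (home i) t + 1 := by
      rcases hT.dist_eq_dist_add_one_of_adj (home i) hrt with h | h <;> omega
    calc w i * T.dist (home i) r ≤ w i * (T.dist (home i) t + 1) := Nat.mul_le_mul_left _ this
      _ = _ := by ring
  rw [← Finset.sum_sdiff hFs, ← Finset.sum_sdiff hFs (f := fun i => w i * T.dist (home i) r)]
    at hmin
  rw [← Finset.sum_sdiff hFs]
  omega

open Classical in
/-- The centroid for the weights `(#s + 1) * f + 1`: the factor `#s + 1` lets the `f`-weight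
dominate, and the `+ 1` keeps every branch from containing all of `s`. -/
theorem IsTree.exists_centroid_lex [Fintype β] (hT : T.IsTree) {ι : Type*} {s : Finset ι}
    (hs : s.Nonempty) (home : ι → β) (f : ι → ℕ) :
    ∃ t, ∀ c, 2 * ∑ i ∈ s with T.branchOf t (home i) = some c, f i ≤ ∑ i ∈ s, f i ∧
      ∃ i ∈ s, T.branchOf t (home i) ≠ some c := by
  obtain ⟨t, ht⟩ := hT.exists_centroid s home (fun i => (s.card + 1) * f i + 1)
  refine ⟨t, fun c => ?_⟩
  have h := ht c
  set F := {i ∈ s | T.branchOf t (home i) = some c}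
  simp only [Finset.sum_add_distrib, ← Finset.mul_sum, Finset.sum_const, smul_eq_mul,
    mul_one] at h
  have hF : F.card ≤ s.card := Finset.card_filter_le _ _
  refine ⟨by nlinarith, ?_⟩
  by_contra! hall
  have hFs : F = s := Finset.filter_true_of_mem hall
  rw [hFs] at h
  have := hs.card_pos
  omega

end SimpleGraph

section EdgesBetween

variable {V : Type u} [Finite V] (G : SimpleGraph V)

theorem ncard_edgesBetween_le_mul (A B : Set V) :
    (edgesBetween G A B).ncard ≤ A.ncard * B.ncard := by
  have hsub : edgesBetween G A B ⊆ (fun p : V × V => s(p.1, p.2)) '' A ×ˢ B := by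
    rintro _ ⟨-, u, hu, w, hw, rfl⟩
    exact ⟨(u, w), ⟨hu, hw⟩, rfl⟩
  calc _ ≤ _ := Set.ncard_le_ncard hsub (Set.toFinite _)
    _ ≤ (A ×ˢ B).ncard := Set.ncard_image_le (Set.toFinite _)
    _ = _ := Set.ncard_prod

theorem ncard_edgesBetween_induce_le (S A B : Set V) :
    (edgesBetween (G.induce S) (Subtype.val ⁻¹' A) (Subtype.val ⁻¹' B)).ncard
      ≤ (edgesBetween G A B).ncard := by
  refine Set.ncard_le_ncard_of_injOn (Sym2.map Subtype.val) ?_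
    (Sym2.map.injective Subtype.val_injective).injOn (Set.toFinite _)
  rintro _ ⟨he, u, hu, w, hw, rfl⟩
  exact ⟨he, u, hu, w, hw, rfl⟩

theorem sum_ncard_compl_adj_le (S : Set V) [Fintype S] :
    ∑ v : S, {w | w ∉ S ∧ G.Adj v w}.ncard ≤ (edgesBetween G S Sᶜ).ncard := by
  classical
  let N (v : S) : Finset V := {w | w ∉ S ∧ G.Adj v w}.toFinite.toFinset
  have hinj : Set.InjOn (fun p : (_ : S) × V => s(↑p.1, p.2)) ↑(Finset.univ.sigma N) := by
    rintro ⟨v, w⟩ hw ⟨v', w'⟩ hw' h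
    simp only [Finset.coe_sigma, Set.mem_sigma_iff, Finset.coe_univ, Set.mem_univ, true_and,
      Finset.mem_coe, Set.Finite.mem_toFinset, Set.mem_ofPred_eq, N] at hw hw'
    dsimp only at h
    rcases Sym2.eq_iff.mp h with ⟨h₁, rfl⟩ | ⟨-, h₂⟩
    · rw [Subtype.ext h₁]
    · exact absurd (h₂ ▸ v'.2) hw.1
  have hsub : (Finset.univ.sigma N).image (fun p => s(↑p.1, p.2))
      ⊆ (edgesBetween G S Sᶜ).toFinite.toFinset := by
    intro e he
    simp only [Finset.mem_image, Finset.mem_sigma, Finset.mem_univ, true_and,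
      Set.Finite.mem_toFinset, Set.mem_ofPred_eq, N] at he
    obtain ⟨⟨v, w⟩, ⟨hwS, hvw⟩, rfl⟩ := he
    exact (Set.Finite.mem_toFinset _).mpr ⟨hvw, v, v.2, w, hwS, rfl⟩
  calc ∑ v : S, {w | w ∉ S ∧ G.Adj v w}.ncard = ∑ v : S, (N v).card :=
        Finset.sum_congr rfl fun v _ => Set.ncard_eq_toFinset_card _ _
    _ = ((Finset.univ.sigma N).image fun p => s(↑p.1, p.2)).card := by
        rw [Finset.card_image_of_injOn hinj, Finset.card_sigma]
    _ ≤ _ := Finset.card_le_card hsub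
    _ = _ := (Set.ncard_eq_toFinset_card _ _).symm

end EdgesBetween

namespace TreeCutDecomp

variable {V : Type u} {G : SimpleGraph V}

noncomputable def home (D : TreeCutDecomp G) (v : V) : D.β :=
  (D.covers v).choose

theorem mem_bag_iff_home_eq (D : TreeCutDecomp G) {v : V} {b : D.β} :
    v ∈ D.bag b ↔ D.home v = b := by
  refine ⟨fun hv => ?_, fun h => h ▸ (D.covers v).choose_spec⟩
  by_contra hne
  exact Set.disjoint_left.mp (D.disj hne) (D.covers v).choose_spec hv

theorem exists_home_ne [Finite V] (D : TreeCutDecomp G) {S : Set V} {t : D.β}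
    (h : (D.bag t).ncard < S.ncard) : ∃ v ∈ S, D.home v ≠ t := by
  by_contra! h'
  exact h.not_ge (Set.ncard_le_ncard (fun v hv => D.mem_bag_iff_home_eq.mpr (h' v hv)))

theorem crosses_of_branchOf_ne (D : TreeCutDecomp G) {t b₁ b₂ : D.β} {u v : V}
    (huv : G.Adj u v) (hu : u ∈ D.bag b₁) (hv : v ∈ D.bag b₂) (h₁ : b₁ ≠ t) (h₂ : b₂ ≠ t)
    (h : D.T.branchOf t b₁ ≠ D.T.branchOf t b₂) : D.Crosses t s(u, v) :=
  ⟨huv, u, v, b₁, b₂, h₁, h₂, rfl, hu, hv, fun hr => h (branchOf_eq_of_reachable hr)⟩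

def induce (D : TreeCutDecomp G) (S : Set V) : TreeCutDecomp (G.induce S) where
  β := D.β
  fintypeβ := D.fintypeβ
  T := D.T
  isTree := D.isTree
  bag b := Subtype.val ⁻¹' D.bag b
  disj _ _ h := (D.disj h).preimage _
  covers v := D.covers v

section Induce

variable [Finite V] (D : TreeCutDecomp G) (S : Set V)

theorem ncard_bag_induce_le (b : D.β) : ((D.induce S).bag b).ncard ≤ (D.bag b).ncard :=
  Set.ncard_le_ncard_of_injOn Subtype.val (fun _ h => h) Subtype.val_injective.injOn
    (Set.toFinite _)

theorem crossNum_induce_le (b : D.β) : (D.induce S).crossNum b ≤ D.crossNum b := by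
  refine Set.ncard_le_ncard_of_injOn (Sym2.map Subtype.val) ?_
    (Sym2.map.injective Subtype.val_injective).injOn (Set.toFinite _)
  rintro _ ⟨he, u, v, s₁, s₂, h₁, h₂, rfl, hu, hv, hnr⟩
  exact ⟨he, u, v, s₁, s₂, h₁, h₂, rfl, hu, hv, hnr⟩

end Induce

-- `branchOf t` doubles as the contraction map onto the star: `t` goes to the centre `none`.
noncomputable def starAt (D : TreeCutDecomp G) (t : D.β) : TreeCutDecomp G where
  β := Option (D.T.induce {x | x ≠ t}).ConnectedComponent
  fintypeβ := have := D.fintypeβ; Fintype.ofFinite _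
  T := starGraph none
  isTree := isTree_starGraph none
  bag o := {v | D.T.branchOf t (D.home v) = o}
  disj _ _ h := Set.disjoint_left.mpr fun _ hv hv' => h (hv.symm.trans hv')
  covers _ := ⟨_, rfl⟩

section StarAt

variable (D : TreeCutDecomp G) (t : D.β)

theorem starAt_bag_none : (D.starAt t).bag none = D.bag t := by
  ext
  exact branchOf_eq_none_iff.trans D.mem_bag_iff_home_eq.symm

theorem crosses_of_crosses_starAt {e : Sym2 V} (he : (D.starAt t).Crosses none e) :
    D.Crosses t e := by
  obtain ⟨huv, u, v, s₁, s₂, h₁, h₂, rfl, hu, hv, hnr⟩ := he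
  have hne : s₁ ≠ s₂ := by
    rintro rfl
    exact hnr (Reachable.refl _)
  refine D.crosses_of_branchOf_ne huv (D.mem_bag_iff_home_eq.mpr rfl)
    (D.mem_bag_iff_home_eq.mpr rfl) ?_ ?_ (fun h => hne (hu.symm.trans (h.trans hv)))
  · exact fun h => h₁ (hu.symm.trans (branchOf_eq_none_iff.mpr h))
  · exact fun h => h₂ (hv.symm.trans (branchOf_eq_none_iff.mpr h))

variable [Finite V]

open Classical in
theorem sum_bag_induce_starAt (S : Set V) [Fintype S]
    (o : Option (D.T.induce {x | x ≠ t}).ConnectedComponent) (f : S → ℕ) :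
    ∑ v ∈ (Set.toFinite (((D.starAt t).induce S).bag o)).toFinset, f v
      = ∑ v ∈ Finset.univ.filter (fun v : S => D.T.branchOf t (D.home v) = o), f v :=
  Finset.sum_congr
    (Finset.ext fun _ => (Set.Finite.mem_toFinset _).trans (by simp [starAt, induce]))
    fun _ _ => rfl

theorem crossNum_starAt_none_le : (D.starAt t).crossNum none ≤ D.crossNum t :=
  Set.ncard_le_ncard (fun _ => D.crosses_of_crosses_starAt t) (Set.toFinite _)

theorem exists_ncard_edgesBetween_starAt_le (c : (D.T.induce {x | x ≠ t}).ConnectedComponent) :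
    ∃ r, (edgesBetween G ((D.starAt t).bag (some c)) ((D.starAt t).bag none)).ncard
      ≤ (D.bag r).ncard * (D.bag t).ncard + D.crossNum r := by
  obtain ⟨r, hrt, hr⟩ := D.isTree.connected.exists_adj_branchOf_eq c
  refine ⟨r, ?_⟩
  rw [starAt_bag_none]
  have hsub : edgesBetween G ((D.starAt t).bag (some c)) (D.bag t)
      ⊆ edgesBetween G (D.bag r) (D.bag t) ∪ {e | D.Crosses r e} := by
    rintro _ ⟨huv, u, hu, v, hv, rfl⟩
    by_cases hur : D.home u = r
    · exact Or.inl ⟨huv, u, D.mem_bag_iff_home_eq.mpr hur, v, hv, rfl⟩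
    · exact Or.inr (D.crosses_of_branchOf_ne huv (D.mem_bag_iff_home_eq.mpr rfl) hv hur
        hrt.ne' (D.isTree.isAcyclic.branchOf_ne_of_branchOf_eq hrt (hu.trans hr.symm)))
  calc _ ≤ _ := Set.ncard_le_ncard hsub (Set.toFinite _)
    _ ≤ _ := Set.ncard_union_le _ _
    _ ≤ _ := Nat.add_le_add_right (ncard_edgesBetween_le_mul G _ _) _

end StarAt

end TreeCutDecomp

theorem stmt_16_general {V : Type u} [Fintype V] (G : SimpleGraph V) (α k : ℕ)
    (D : TreeCutDecomp G)
    (hthick : D.ThickLE α) (hcross : D.CrossLE k) (S : Set V)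
    (hS : α + 1 ≤ S.ncard)
    (hbd : (edgesBetween G S Sᶜ).ncard ≤ 2 * α ^ 2 + 4 * k) :
    ∃ (D' : TreeCutDecomp (G.induce S)) (tc : D'.β),
      (∃ l : D'.β, l ≠ tc) ∧
      (∀ a b : D'.β, D'.T.Adj a b → a = tc ∨ b = tc) ∧
      (D'.bag tc).ncard ≤ α ∧
      D'.crossNum tc ≤ k ∧
      (∀ q : D'.β, q ≠ tc →
        (∑ v ∈ (Set.toFinite (D'.bag q)).toFinset, {w : V | w ∉ S ∧ G.Adj ↑v w}.ncard)
          ≤ α ^ 2 + 2 * k ∧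
        (edgesBetween (G.induce S) (D'.bag q) (D'.bag tc)).ncard ≤ α ^ 2 + k) ∧
      (∀ q : D'.β, q ≠ tc → D'.bag q ≠ Set.univ) := by
  classical
  have := D.fintypeβ
  obtain ⟨x, hx⟩ := Set.nonempty_of_ncard_ne_zero (s := S) (by omega)
  obtain ⟨t, ht⟩ := D.isTree.exists_centroid_lex (s := Finset.univ) ⟨⟨x, hx⟩, Finset.mem_univ _⟩
    (fun v : S => D.home v) (fun v => {w | w ∉ S ∧ G.Adj v w}.ncard)
  obtain ⟨v, -, hvt⟩ := D.exists_home_ne ((hthick t).trans_lt hS)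
  refine ⟨(D.starAt t).induce S, none, ⟨_, mt branchOf_eq_none_iff.mp hvt⟩,
    fun _ _ h => (starGraph_adj.mp h).2, ?_, ?_, fun q hq => ?_, fun q hq => ?_⟩
  · exact ((D.starAt t).ncard_bag_induce_le S none).trans (D.starAt_bag_none t ▸ hthick t)
  · exact ((D.starAt t).crossNum_induce_le S none).trans
      ((D.crossNum_starAt_none_le t).trans (hcross t))
  · obtain ⟨c, rfl⟩ := Option.ne_none_iff_exists'.mp hq
    obtain ⟨r, hr⟩ := D.exists_ncard_edgesBetween_starAt_le t c
    have := (ht c).1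
    have := sum_ncard_compl_adj_le G S
    refine ⟨(D.sum_bag_induce_starAt t S _ _).trans_le (by omega),
      (ncard_edgesBetween_induce_le G S _ _).trans (hr.trans ?_)⟩
    rw [sq]
    exact Nat.add_le_add (Nat.mul_le_mul (hthick r) (hthick t)) (hcross r)
  · obtain ⟨c, rfl⟩ := Option.ne_none_iff_exists'.mp hq
    obtain ⟨v, -, hv⟩ := (ht c).2
    intro h
    exact hv (h ▸ Set.mem_univ v : v ∈ ((D.starAt t).induce S).bag (some c))

/-- If `G` has a tree-cut decomposition of thickness at most `α` and crossing number at
most `k`, and `S ⊆ V(G)` satisfies `|S| ≥ α + 1` and `|δ_G(S, V(G)∖S)| ≤ 2α² + 4k`,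
then, with `γ_S(v) = |δ_G({v}, V(G)∖S)|`, the induced graph `G[S]` has a tree-cut
decomposition whose tree is a star with center `t_c` and at least one leaf,
`|X_{t_c}| ≤ α`, `cross(t_c) ≤ k`, every leaf bag `X_q` satisfies
`γ_S(X_q) ≤ α² + 2k` and `|δ_{G[S]}(X_q, X_{t_c})| ≤ α² + k`, and no leaf bag is all
of `S`. -/
theorem stmt_16 {V : Type u} [Fintype V] (G : SimpleGraph V) (α k : ℕ)
    (hα : 0 < α) (hk : 0 < k) (D : TreeCutDecomp G)
    (hthick : D.ThickLE α) (hcross : D.CrossLE k) (S : Set V)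
    (hS : α + 1 ≤ S.ncard)
    (hbd : (edgesBetween G S Sᶜ).ncard ≤ 2 * α ^ 2 + 4 * k) :
    ∃ (D' : TreeCutDecomp (G.induce S)) (tc : D'.β),
      (∃ l : D'.β, l ≠ tc) ∧
      (∀ a b : D'.β, D'.T.Adj a b → a = tc ∨ b = tc) ∧
      (D'.bag tc).ncard ≤ α ∧
      D'.crossNum tc ≤ k ∧
      (∀ q : D'.β, q ≠ tc →
        (∑ v ∈ (Set.toFinite (D'.bag q)).toFinset, {w : V | w ∉ S ∧ G.Adj ↑v w}.ncard)
          ≤ α ^ 2 + 2 * k ∧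
        (edgesBetween (G.induce S) (D'.bag q) (D'.bag tc)).ncard ≤ α ^ 2 + k) ∧
      (∀ q : D'.β, q ≠ tc → D'.bag q ≠ Set.univ) :=
  stmt_16_general G α k D hthick hcross S hS hbd
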